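/- The function f(x) = x²/2 − l_{p,c}(x) is convex on ℝ, where l_{p,c} is the HOP function. -/

import Mathlib

/-!
With `g = hopGap p c`, i.e. `g t = t²/2 - c^(2-p) t^p / p - c²/2 + c²/p`, we have
`x²/2 - hop p c x = g |x|` for `|x| > c`; since `g c = 0`, the function is `g (max |x| c)`
everywhere. For `p ≤ 1` the power `t^p` is concave on `[0, ∞)`, so `g` is convex there, and
`g' t = t^(p-1) (t^(2-p) - c^(2-p)) ≥ 0` for `t ≥ c`. A convex function monotone on the range
`[c, ∞)` of the convex map `x ↦ max |x| c` composes with it to a convex function.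
-/

/-- The hybrid ordinary-ℓp (HOP) function with parameters `0 < p ≤ 1`, `c > 0`. -/
noncomputable def hop (p c x : ℝ) : ℝ :=
  if |x| ≤ c then x ^ 2 / 2
  else (1 / p) * c ^ ((2 : ℝ) - p) * |x| ^ p + c ^ 2 / 2 - c ^ 2 / p

open Set

noncomputable def hopGap (p c t : ℝ) : ℝ :=
  t ^ 2 / 2 - (1 / p) * c ^ ((2 : ℝ) - p) * t ^ p - c ^ 2 / 2 + c ^ 2 / p

section HopGap

variable {p c : ℝ}

lemma hopGap_self (hc : 0 < c) : hopGap p c c = 0 := by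
  have hpow : c ^ ((2 : ℝ) - p) * c ^ p = c ^ 2 := by
    rw [← Real.rpow_add hc, sub_add_cancel, Real.rpow_two]
  simp only [hopGap, mul_assoc, hpow]
  ring

lemma sub_hop_eq_hopGap_max_abs (hc : 0 < c) (x : ℝ) :
    x ^ 2 / 2 - hop p c x = hopGap p c (max |x| c) := by
  by_cases hx : |x| ≤ c
  · rw [hop, if_pos hx, max_eq_right hx, hopGap_self hc, sub_self]
  · rw [hop, if_neg hx, max_eq_left (not_le.1 hx).le, hopGap, sq_abs]
    ring

lemma convexOn_hopGap (hp : 0 ≤ p) (hp1 : p ≤ 1) (hc : 0 ≤ c) :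
    ConvexOn ℝ (Ici 0) (hopGap p c) := by
  have hsq : ConvexOn ℝ (Ici 0) (fun t : ℝ => (1 / 2 : ℝ) • t ^ 2) :=
    (convexOn_pow 2).smul (by norm_num)
  have hrpow : ConvexOn ℝ (Ici 0) (fun t : ℝ => -((1 / p * c ^ ((2 : ℝ) - p)) • t ^ p)) :=
    ((Real.concaveOn_rpow hp hp1).smul (by positivity)).neg
  have hsplit : hopGap p c = fun t : ℝ =>
      (1 / 2 : ℝ) • t ^ 2 + -((1 / p * c ^ ((2 : ℝ) - p)) • t ^ p) + (-(c ^ 2 / 2) + c ^ 2 / p) := by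
    funext t
    simp only [hopGap, smul_eq_mul]
    ring
  rw [hsplit]
  exact (hsq.add hrpow).add_const _

lemma hasDerivAt_hopGap (hp : p ≠ 0) {t : ℝ} (ht : 0 < t) :
    HasDerivAt (hopGap p c) (t - c ^ ((2 : ℝ) - p) * t ^ (p - 1)) t := by
  have hsq : HasDerivAt (fun t : ℝ => t ^ 2 / 2) t t := by
    simpa using (hasDerivAt_pow 2 t).div_const 2
  have hrpow := (Real.hasDerivAt_rpow_const (p := p) (Or.inl ht.ne')).const_mul
    (1 / p * c ^ ((2 : ℝ) - p))
  have hsplit : hopGap p c = fun s : ℝ =>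
      s ^ 2 / 2 - 1 / p * c ^ ((2 : ℝ) - p) * s ^ p + (-(c ^ 2 / 2) + c ^ 2 / p) := by
    funext s
    simp only [hopGap]
    ring
  have hcoef : 1 / p * c ^ ((2 : ℝ) - p) * (p * t ^ (p - 1)) = c ^ ((2 : ℝ) - p) * t ^ (p - 1) := by
    field_simp
  rw [hsplit, ← hcoef]
  exact (hsq.sub hrpow).add_const _

lemma monotoneOn_hopGap (hp : p ≠ 0) (hp2 : p ≤ 2) (hc : 0 < c) :
    MonotoneOn (hopGap p c) (Ici c) := by
  have hderiv (t : ℝ) (ht : c ≤ t) :=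
    hasDerivAt_hopGap (c := c) hp (hc.trans_le ht)
  refine monotoneOn_of_deriv_nonneg (convex_Ici c)
    (fun t ht => (hderiv t ht).continuousAt.continuousWithinAt)
    (fun t ht => (hderiv t (interior_subset ht)).differentiableAt.differentiableWithinAt)
    fun t ht => ?_
  rw [interior_Ici, mem_Ioi] at ht
  have ht0 : 0 < t := hc.trans ht
  rw [(hderiv t ht.le).deriv, sub_nonneg]
  calc c ^ ((2 : ℝ) - p) * t ^ (p - 1)
      ≤ t ^ ((2 : ℝ) - p) * t ^ (p - 1) := by gcongr
    _ = t := by rw [← Real.rpow_add ht0]; norm_num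

end HopGap

lemma image_max_abs_univ {c : ℝ} (hc : 0 ≤ c) :
    (fun x : ℝ => max |x| c) '' univ = Ici c := by
  refine Subset.antisymm (image_subset_iff.2 fun x _ => le_max_right |x| c) fun t ht => ?_
  exact ⟨t, trivial, show max |t| c = t by rw [abs_of_nonneg (hc.trans ht), max_eq_left ht]⟩

/-- `x ↦ x²/2 − l_{p,c}(x)` is convex on ℝ, where `l_{p,c}` is HOP. -/
theorem hop_quadratic_minus_convex (p c : ℝ) (hp : 0 < p) (hp1 : p ≤ 1) (hc : 0 < c) :
    ConvexOn ℝ Set.univ (fun x : ℝ => x ^ 2 / 2 - hop p c x) := by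
  have hconv : ConvexOn ℝ (Ici c) (hopGap p c) :=
    (convexOn_hopGap hp.le hp1 hc.le).subset (Ici_subset_Ici.2 hc.le) (convex_Ici c)
  have hmono : MonotoneOn (hopGap p c) (Ici c) := monotoneOn_hopGap hp.ne' (by linarith) hc
  have hmax : ConvexOn ℝ univ (fun x : ℝ => max |x| c) :=
    (convexOn_univ_norm (E := ℝ)).sup (convexOn_const c convex_univ)
  rw [← image_max_abs_univ hc.le] at hconv hmono
  simpa only [Function.comp_def, ← sub_hop_eq_hopGap_max_abs hc] using hconv.comp hmax hmono
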